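/- Suppose p ≡ 3 (mod 4). Then the number of pairs (x₃,x₄) ∈ F² satisfying x₃² + x₄² = −1, x₃^{p^k+1} + x₄^{p^k+1} = −1, and x₃^{p^{2k}+1} + x₄^{p^{2k}+1} = −1 equals p + 1. -/

import Mathlib

/-!
Since `|F| = p ^ m ≡ 3 (mod 4)`, `-1` is not a square in `F`, so `a ^ 2 + b ^ 2 = 0` forces
`a = b = 0`. If `φ = x ↦ x ^ (p ^ k)`, the first two equations give `φ x ^ 2 + φ y ^ 2 = -1` and
`x φ x + y φ y = -1`, hence `(φ x - x) ^ 2 + (φ y - y) ^ 2 = 0`: both coordinates are fixed by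
`φ`, and, as `gcd(m, k) = 1`, by the Frobenius itself. So the solutions are exactly the points of
the circle `x ^ 2 + y ^ 2 = -1` over the prime field, where the third equation holds trivially.
Over a finite field `K` in which `-1` is not a square, the fibres of `(x, y) ↦ x ^ 2 + y ^ 2`
over nonzero `c` are all equinumerous (multiply by an element of norm `c` in `K[i]`) and the fibre
over `0` is a single point, so each has `(|K| ^ 2 - 1) / (|K| - 1) = |K| + 1` elements.
-/

open Polynomial

theorem pow_eq_self_of_pow_pow_eq_self {M : Type*} [Monoid M] {x : M} {p m k : ℕ}
    (hm : x ^ p ^ m = x) (hk : x ^ p ^ k = x) (hmk : m.Coprime k) : x ^ p = x := by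
  have hper : ∀ {n}, Function.IsPeriodicPt (· ^ p) n x ↔ x ^ p ^ n = x := by
    intro n
    rw [Function.IsPeriodicPt, Function.IsFixedPt, pow_iterate]
  simpa [hmk.gcd_eq_one] using hper.mp ((hper.mpr hm).gcd (hper.mpr hk))

theorem pow_pow_eq_self_of_pow_eq_self {M : Type*} [Monoid M] {x : M} {p : ℕ}
    (hx : x ^ p = x) (n : ℕ) : x ^ p ^ n = x := by
  have : Function.IsFixedPt (· ^ p) x := hx
  simpa [pow_iterate, Function.IsFixedPt] using this.iterate n

theorem sq_add_sq_eq_zero_iff {K : Type*} [Field K] (h : ¬IsSquare (-1 : K)) {a b : K} :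
    a ^ 2 + b ^ 2 = 0 ↔ a = 0 ∧ b = 0 := by
  refine ⟨fun hab => ?_, fun ⟨ha, hb⟩ => by simp [ha, hb]⟩
  by_cases hb : b = 0
  · simp_all
  · exact absurd ⟨a / b, by field_simp; linear_combination -hab⟩ h

theorem RingHom.eq_self_of_sq_add_sq_eq_neg_one {K : Type*} [Field K] (h : ¬IsSquare (-1 : K))
    (φ : K →+* K) {x y : K} (h₁ : x ^ 2 + y ^ 2 = -1) (h₂ : φ x * x + φ y * y = -1) :
    φ x = x ∧ φ y = y := by
  have hφ : φ x ^ 2 + φ y ^ 2 = -1 := by simpa using congrArg φ h₁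
  have h₀ : (φ x - x) ^ 2 + (φ y - y) ^ 2 = 0 := by linear_combination hφ + h₁ - 2 * h₂
  simpa [sub_eq_zero] using (sq_add_sq_eq_zero_iff h).mp h₀

theorem FiniteField.exists_sq_add_sq {K : Type*} [Field K] [Fintype K]
    (hK : Fintype.card K % 2 = 1) (c : K) : ∃ a b : K, a ^ 2 + b ^ 2 = c := by
  obtain ⟨a, b, hab⟩ := FiniteField.exists_root_sum_quadratic (degree_X_pow 2)
    (degree_X_pow_sub_C (by decide) c) hK
  exact ⟨a, b, by simpa [← add_sub_assoc, sub_eq_zero] using hab⟩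

-- Multiplication by `u + v i` in `K[i]`, whose norm is `c`.
def sqAddSqEquivOfSqAddSq {K : Type*} [Field K] {c u v : K} (huv : u ^ 2 + v ^ 2 = c)
    (hc : c ≠ 0) :
    {x : K × K // x.1 ^ 2 + x.2 ^ 2 = 1} ≃ {x : K × K // x.1 ^ 2 + x.2 ^ 2 = c} where
  toFun x := ⟨(x.1.1 * u - x.1.2 * v, x.1.1 * v + x.1.2 * u), by
    simp only; linear_combination (u ^ 2 + v ^ 2) * x.2 + huv⟩
  invFun x := ⟨((x.1.1 * u + x.1.2 * v) / c, (x.1.2 * u - x.1.1 * v) / c), by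
    simp only; field_simp; linear_combination (u ^ 2 + v ^ 2) * x.2 + c * huv⟩
  left_inv x := by
    ext
    · simp only; field_simp; linear_combination x.1.1 * huv
    · simp only; field_simp; linear_combination x.1.2 * huv
  right_inv x := by
    ext
    · simp only; field_simp; linear_combination x.1.1 * huv
    · simp only; field_simp; linear_combination x.1.2 * huv

theorem FiniteField.card_sq_add_sq_eq {K : Type*} [Field K] [Finite K] (h : ¬IsSquare (-1 : K))
    {c : K} (hc : c ≠ 0) :
    Nat.card {x : K × K // x.1 ^ 2 + x.2 ^ 2 = c} = Nat.card K + 1 := by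
  classical
  have := Fintype.ofFinite K
  have hK : Fintype.card K % 2 = 1 := by
    have := FiniteField.isSquare_neg_one_iff.not_left.mp h
    omega
  set N : K → ℕ := fun c => Nat.card {x : K × K // x.1 ^ 2 + x.2 ^ 2 = c}
  have hNc : ∀ c ≠ 0, N c = N 1 := fun c hc =>
    let ⟨_, _, huv⟩ := exists_sq_add_sq hK c
    (Nat.card_congr (sqAddSqEquivOfSqAddSq huv hc)).symm
  have hN0 : N 0 = 1 := by
    refine Nat.card_eq_one_iff_exists.mpr ⟨⟨(0, 0), by simp⟩, fun x => ?_⟩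
    obtain ⟨h₁, h₂⟩ := (sq_add_sq_eq_zero_iff h).mp x.2
    ext <;> simp [h₁, h₂]
  have htotal : Nat.card K * Nat.card K = 1 + (Nat.card K - 1) * N 1 := by
    rw [← Nat.card_prod,
      ← Nat.card_congr (Equiv.sigmaFiberEquiv fun x : K × K => x.1 ^ 2 + x.2 ^ 2), Nat.card_sigma,
      ← Finset.add_sum_erase _ _ (Finset.mem_univ 0),
      Finset.sum_congr rfl fun c hc => hNc c (Finset.ne_of_mem_erase hc), Finset.sum_const,
      Finset.card_erase_of_mem (Finset.mem_univ 0), Finset.card_univ, ← Nat.card_eq_fintype_card]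
    exact congrArg₂ _ hN0 rfl
  obtain ⟨d, hd⟩ : ∃ d, Nat.card K = d + 2 :=
    ⟨Nat.card K - 2, by have : 1 < Nat.card K := Finite.one_lt_card; omega⟩
  rw [hd, show d + 2 - 1 = d + 1 by omega] at htotal
  change N c = _
  rw [hNc c hc, hd]
  nlinarith

theorem Nat.pow_mod_four_eq_three {p m : ℕ} (hp : p % 4 = 3) (hm : Odd m) : p ^ m % 4 = 3 := by
  obtain ⟨j, rfl⟩ := hm
  rw [Nat.pow_mod, hp, pow_succ, pow_mul]
  norm_num [Nat.mul_mod, Nat.pow_mod]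

section PrimeSubfield

variable {F : Type*} [Field F] (p : ℕ) [Fact p.Prime] [CharP F p]

theorem Subfield.pow_pow_add_one_of_mem_bot {x : F} (hx : x ∈ (⊥ : Subfield F)) (n : ℕ) :
    x ^ (p ^ n + 1) = x ^ 2 := by
  rw [pow_succ, pow_pow_eq_self_of_pow_eq_self ((Subfield.mem_bot_iff_pow_eq_self F p).mp hx), sq]

theorem FiniteField.mem_bot_of_sq_add_sq_eq_neg_one [Fintype F] {m k : ℕ}
    (hF : Fintype.card F = p ^ m) (hmk : m.Coprime k) (hns : ¬IsSquare (-1 : F)) {x y : F}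
    (h₁ : x ^ 2 + y ^ 2 = -1) (h₂ : x ^ (p ^ k + 1) + y ^ (p ^ k + 1) = -1) :
    x ∈ (⊥ : Subfield F) ∧ y ∈ (⊥ : Subfield F) := by
  have hfix := (iterateFrobenius F p k).eq_self_of_sq_add_sq_eq_neg_one hns h₁
    (by simpa only [iterateFrobenius_def, ← pow_succ] using h₂)
  have hbot : ∀ z : F, z ^ p ^ k = z → z ∈ (⊥ : Subfield F) := fun z hz =>
    (Subfield.mem_bot_iff_pow_eq_self F p).mpr
      (pow_eq_self_of_pow_pow_eq_self (hF ▸ FiniteField.pow_card z) hz hmk)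
  exact ⟨hbot x hfix.1, hbot y hfix.2⟩

theorem FiniteField.setOf_sq_add_sq_frobenius_eq_image_bot [Fintype F] {m k : ℕ}
    (hF : Fintype.card F = p ^ m) (hmk : m.Coprime k) (hns : ¬IsSquare (-1 : F)) :
    {x : F × F | x.1 ^ 2 + x.2 ^ 2 = -1 ∧
        x.1 ^ (p ^ k + 1) + x.2 ^ (p ^ k + 1) = -1 ∧
        x.1 ^ (p ^ (2 * k) + 1) + x.2 ^ (p ^ (2 * k) + 1) = -1} =
      Prod.map (↑) (↑) '' {a : (⊥ : Subfield F) × (⊥ : Subfield F) | a.1 ^ 2 + a.2 ^ 2 = -1} := by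
  ext x
  constructor
  · rintro ⟨h₁, h₂, -⟩
    obtain ⟨hx, hy⟩ := mem_bot_of_sq_add_sq_eq_neg_one p hF hmk hns h₁ h₂
    exact ⟨(⟨x.1, hx⟩, ⟨x.2, hy⟩), Subtype.ext (by simpa using h₁), rfl⟩
  · rintro ⟨⟨a, b⟩, hab, rfl⟩
    have h₁ : (a : F) ^ 2 + (b : F) ^ 2 = -1 := by simpa using congrArg Subtype.val hab
    rw [Set.mem_ofPred_eq, Prod.map_fst, Prod.map_snd, Subfield.pow_pow_add_one_of_mem_bot p a.2,
      Subfield.pow_pow_add_one_of_mem_bot p b.2, Subfield.pow_pow_add_one_of_mem_bot p a.2,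
      Subfield.pow_pow_add_one_of_mem_bot p b.2]
    exact ⟨h₁, h₁, h₁⟩

end PrimeSubfield

theorem N2_one_one_general (p m k : ℕ) (hp : p.Prime) (hp4 : p % 4 = 3)
    (hm : Odd m) (hgcd : Nat.gcd m k = 1)
    (F : Type*) [Field F] [Fintype F] (hF : Fintype.card F = p ^ m) :
    Nat.card {x : F × F //
        x.1 ^ 2 + x.2 ^ 2 = -1 ∧
        x.1 ^ (p ^ k + 1) + x.2 ^ (p ^ k + 1) = -1 ∧
        x.1 ^ (p ^ (2 * k) + 1) + x.2 ^ (p ^ (2 * k) + 1) = -1} = p + 1 := by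
  have := Fact.mk hp
  have := charP_of_card_eq_prime_pow hF
  have hns : ¬IsSquare (-1 : F) := by
    rw [FiniteField.isSquare_neg_one_iff, hF, not_not]
    exact Nat.pow_mod_four_eq_three hp4 hm
  have hnsBot : ¬IsSquare (-1 : (⊥ : Subfield F)) := fun h =>
    hns (by simpa using h.map (⊥ : Subfield F).subtype)
  rw [← Set.coe_ofPred, FiniteField.setOf_sq_add_sq_frobenius_eq_image_bot p hF hgcd hns,
    Nat.card_image_of_injective (Subtype.val_injective.prodMap Subtype.val_injective),
    Set.coe_ofPred, FiniteField.card_sq_add_sq_eq hnsBot (neg_ne_zero.mpr one_ne_zero),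
    Subfield.card_bot F p]

theorem N2_one_one (p m k : ℕ) (hp : p.Prime) (hp4 : p % 4 = 3)
    (hm : Odd m) (hm5 : 5 ≤ m) (hk : 0 < k) (hgcd : Nat.gcd m k = 1)
    (F : Type*) [Field F] [Fintype F] (hF : Fintype.card F = p ^ m) :
    Nat.card {x : F × F //
        x.1 ^ 2 + x.2 ^ 2 = -1 ∧
        x.1 ^ (p ^ k + 1) + x.2 ^ (p ^ k + 1) = -1 ∧
        x.1 ^ (p ^ (2 * k) + 1) + x.2 ^ (p ^ (2 * k) + 1) = -1} = p + 1 :=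
  N2_one_one_general p m k hp hp4 hm hgcd F hF
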